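/- arXiv:1708.03652 — 6 statements merged into one kernel-verified Lean document; each statement's English description precedes it below -/
import Mathlib

section
/- Let p be a prime and let k be a commutative ring of characteristic p. For a polynomial f in two variables u, v over k, write f = Σ_{i,j} α_{i,j} u^i v^j. Then applying the partial derivative operator ∂^{2p-2}/∂u^{p-1}∂v^{p-1} (i.e. the (p-1)-fold iterate of ∂/∂u followed by the (p-1)-fold iterate of ∂/∂v) to f yields Σ_{i,j} α_{ip+p-1, jp+p-1} u^{ip} v^{jp}. -/
/-!
Differentiating `n` times in `X i` sends the coefficient of `X^(m + n·eᵢ)` to that of `X^m`,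
multiplied by the rising factorial `(mᵢ + 1)(mᵢ + 2)⋯(mᵢ + n)`. For `n = p - 1` this product is
`(p - 1)! = -1` (Wilson) when `p ∣ mᵢ`, and otherwise one of its factors is a multiple of `p`.
-/

open MvPolynomial

theorem MvPolynomial.coeff_iterate_pderiv {R σ : Type*} [CommRing R] (i : σ) (n : ℕ)
    (f : MvPolynomial σ R) (m : σ →₀ ℕ) :
    coeff m ((fun g => pderiv i g)^[n] f) =
      coeff (m + Finsupp.single i n) f * (m i + 1).ascFactorial n := by
  induction n generalizing f m with
  | zero => simp
  | succ n ih =>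
    rw [Function.iterate_succ_apply, ih, coeff_pderiv, add_assoc, ← Finsupp.single_add,
      Nat.ascFactorial_succ, mul_assoc]
    simp only [Finsupp.add_apply, Finsupp.single_eq_same, Nat.cast_mul, Nat.cast_add,
      Nat.cast_one]
    ring

theorem Nat.dvd_succ_ascFactorial_pred {p m : ℕ} (hp : 0 < p) (hm : ¬p ∣ m) :
    p ∣ (m + 1).ascFactorial (p - 1) := by
  have hr : 0 < m % p := Nat.pos_of_ne_zero fun h => hm (Nat.dvd_of_mod_eq_zero h)
  have hlt : m % p < p := Nat.mod_lt m hp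
  rw [Nat.ascFactorial_eq_prod_range]
  -- the factor `m + 1 + (p - 1 - m % p)` is the next multiple of `p` above `m`
  refine (Dvd.intro (m / p + 1) ?_).trans
    (Finset.dvd_prod_of_mem _ (Finset.mem_range.mpr (by omega : p - 1 - m % p < p - 1)))
  have := Nat.mod_add_div m p
  generalize m / p = q at this
  rw [mul_add, mul_one]
  omega

theorem CharP.cast_succ_ascFactorial_pred {k : Type*} [CommRing k] (p : ℕ) [CharP k p]
    (hp : p.Prime) (m : ℕ) :
    ((m + 1).ascFactorial (p - 1) : k) = if p ∣ m then -1 else 0 := by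
  split_ifs with hm
  · have : Fact p.Prime := ⟨hp⟩
    have hm0 : (m : k) = 0 := (CharP.cast_eq_zero_iff k p m).mpr hm
    rw [Nat.cast_ascFactorial, Nat.cast_succ, hm0, zero_add, ascPochhammer_eval_one,
      ← map_natCast (ZMod.castHom (dvd_refl p) k), ZMod.wilsons_lemma, map_neg, map_one]
  · exact (CharP.cast_eq_zero_iff k p _).mpr (Nat.dvd_succ_ascFactorial_pred hp.pos hm)

/-- Let `p` be a prime and `k` a commutative ring of characteristic `p`.
For `f ∈ k[u,v]` (with `u = X 0`, `v = X 1`), applying the operator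
`∇ = ∂^{p-1}/∂u^{p-1}` followed by `∂^{p-1}/∂v^{p-1}` to
`f = Σ_{i,j} α_{i,j} u^i v^j` yields `Σ_{i,j} α_{ip+p-1, jp+p-1} u^{ip} v^{jp}`,
expressed here coefficientwise: the coefficient of `u^{m₀} v^{m₁}` in `∇ f` equals
`α_{m₀+p-1, m₁+p-1}` if `p ∣ m₀` and `p ∣ m₁`, and `0` otherwise. -/
theorem stmt0 (p : ℕ) (hp : p.Prime) (k : Type*) [CommRing k] [CharP k p]
    (f : MvPolynomial (Fin 2) k) (m : Fin 2 →₀ ℕ) :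
    coeff m
      ((fun g => pderiv (1 : Fin 2) g)^[p - 1]
        ((fun g => pderiv (0 : Fin 2) g)^[p - 1] f)) =
      if p ∣ m 0 ∧ p ∣ m 1 then
        coeff (m + (Finsupp.single 0 (p - 1) + Finsupp.single 1 (p - 1))) f
      else 0 := by
  rw [coeff_iterate_pderiv, coeff_iterate_pderiv, add_assoc, add_comm (Finsupp.single 1 _),
    Finsupp.add_apply, Finsupp.single_eq_of_ne (by decide), add_zero,
    CharP.cast_succ_ascFactorial_pred p hp, CharP.cast_succ_ascFactorial_pred p hp]
  by_cases h0 : p ∣ m 0 <;> by_cases h1 : p ∣ m 1 <;> simp [h0, h1]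
end

section
/- Let p be a prime with p ≡ 5 (mod 6) and let k be a field of characteristic p. Let R = k[a,b,c] and work in the polynomial ring R[X₁,X₂,X₃,X₄]. Let κ = X₂²X₄² − 4X₁X₃X₄² + 4X₁³X₄ − 4X₃³X₄ + 4X₁²X₃² − 8X₁X₂²X₃ + 4X₂⁴ and v = aX₁ + bX₂ + cX₃ + X₄. For indices (i₁,i₂,i₃,i₄), let c_{i₁,i₂,i₃,i₄} ∈ R denote the coefficient of X₁^{i₁}X₂^{i₂}X₃^{i₃}X₄^{i₄} in (vκ)^{p−1}. Let H_X be the 3×3 matrix over R with rows: (c_{2p−2,p−1,p−1,p−1} − a^p c_{p−2,p−1,p−1,2p−1}, c_{p−2,2p−1,p−1,p−1} − b^p c_{p−2,p−1,p−1,2p−1}, c_{p−2,p−1,2p−1,p−1} − c^p c_{p−2,p−1,p−1,2p−1}); (c_{2p−1,p−2,p−1,p−1} − a^p c_{p−1,p−2,p−1,2p−1}, c_{p−1,2p−2,p−1,p−1} − b^p c_{p−1,p−2,p−1,2p−1}, c_{p−1,p−2,2p−1,p−1} − c^p c_{p−1,p−2,p−1,2p−1}); (c_{2p−1,p−1,p−2,p−1}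 − a^p c_{p−1,p−1,p−2,2p−1}, c_{p−1,2p−1,p−2,p−1} − b^p c_{p−1,p−1,p−2,2p−1}, c_{p−1,p−1,2p−2,p−1} − c^p c_{p−1,p−1,p−2,2p−1}). Then det(H_X), considered as a polynomial in the variable b (with coefficients in k[a,c]), has degree exactly 4(p−1). -/
/-!
Regard `det H_X` as a polynomial in `b` over `k[a, c]`. Since `b` enters `(vκ)^{p−1}` only through
the term `bX₂` of `v`, the coefficient `c_i` has `b`-degree at most `min(p − 1, i₂)`, and modulo
`(a, c)` its coefficient of `b^{i₂}` is `binom(p − 1, i₂)` times a coefficient of `κ^{p−1}` at a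
monomial free of `X₂`. Hence the `(i, j)` entry of `H_X` has `b`-degree at most `r_i + s_j` with
`r = (p − 1, p − 2, p − 1)`, `s = (0, p, 0)`; by the Leibniz formula `det H_X` has `b`-degree at
most `Σ r + Σ s = 4(p − 1)`, and its coefficient of `b^{4(p−1)}` is the determinant of the matrix
of these top coefficients. Modulo `X₂`, `κ ≡ 4(X₁² − X₃X₄)(X₁X₄ + X₃²)`, so each of the relevant
coefficients of `κ^{p−1}` comes from at most one pair of binomial terms; for `p ≡ 5 (mod 6)` the
reduction mod `(a, c)` of the matrix of top coefficients is `!![0, 0, -1; 0, 1, 0; -1, 0, 0]`,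
whose determinant is `-1 ≠ 0`.
-/

open MvPolynomial

noncomputable section Stmt2

/-- Exponent vector `(i₁,i₂,i₃,i₄)` for the variables `X₁,X₂,X₃,X₄`. -/
def expv (i1 i2 i3 i4 : ℕ) : Fin 4 →₀ ℕ := Finsupp.equivFunOnFinite.symm ![i1, i2, i3, i4]

variable (k : Type*) [Field k]

/-- The Kummer quartic surface `κ` of the genus-2 curve `z² = x⁶ − 1`, as a polynomial in
`X₁ = X 0, X₂ = X 1, X₃ = X 2, X₄ = X 3` over `R = k[a,b,c]`. -/
def kappa2 : MvPolynomial (Fin 4) (MvPolynomial (Fin 3) k) :=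
  X 1 ^ 2 * X 3 ^ 2 - 4 * X 0 * X 2 * X 3 ^ 2 + 4 * X 0 ^ 3 * X 3 - 4 * X 2 ^ 3 * X 3
    + 4 * X 0 ^ 2 * X 2 ^ 2 - 8 * X 0 * X 1 ^ 2 * X 2 + 4 * X 1 ^ 4

/-- The plane `v = a X₁ + b X₂ + c X₃ + X₄`, where `a = X 0, b = X 1, c = X 2` in
`R = k[a,b,c]`. -/
def vpl2 : MvPolynomial (Fin 4) (MvPolynomial (Fin 3) k) :=
  C (X 0) * X 0 + C (X 1) * X 1 + C (X 2) * X 2 + X 3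

/-- `c_{i₁,i₂,i₃,i₄} ∈ R = k[a,b,c]`: the coefficient of `X₁^{i₁}X₂^{i₂}X₃^{i₃}X₄^{i₄}`
in `(vκ)^{p−1}`. -/
def cc2 (p i1 i2 i3 i4 : ℕ) : MvPolynomial (Fin 3) k :=
  coeff (expv i1 i2 i3 i4) ((vpl2 k * kappa2 k) ^ (p - 1))

/-- The Hasse–Witt matrix `H_X` of the plane quartic `X = V ∩ K`. -/
def HX2 (p : ℕ) : Matrix (Fin 3) (Fin 3) (MvPolynomial (Fin 3) k) :=
  !![cc2 k p (2*p-2) (p-1) (p-1) (p-1) - X 0 ^ p * cc2 k p (p-2) (p-1) (p-1) (2*p-1),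
     cc2 k p (p-2) (2*p-1) (p-1) (p-1) - X 1 ^ p * cc2 k p (p-2) (p-1) (p-1) (2*p-1),
     cc2 k p (p-2) (p-1) (2*p-1) (p-1) - X 2 ^ p * cc2 k p (p-2) (p-1) (p-1) (2*p-1);
     cc2 k p (2*p-1) (p-2) (p-1) (p-1) - X 0 ^ p * cc2 k p (p-1) (p-2) (p-1) (2*p-1),
     cc2 k p (p-1) (2*p-2) (p-1) (p-1) - X 1 ^ p * cc2 k p (p-1) (p-2) (p-1) (2*p-1),
     cc2 k p (p-1) (p-2) (2*p-1) (p-1) - X 2 ^ p * cc2 k p (p-1) (p-2) (p-1) (2*p-1);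
     cc2 k p (2*p-1) (p-1) (p-2) (p-1) - X 0 ^ p * cc2 k p (p-1) (p-1) (p-2) (2*p-1),
     cc2 k p (p-1) (2*p-1) (p-2) (p-1) - X 1 ^ p * cc2 k p (p-1) (p-1) (p-2) (2*p-1),
     cc2 k p (p-1) (p-1) (2*p-2) (p-1) - X 2 ^ p * cc2 k p (p-1) (p-1) (p-2) (2*p-1)]

namespace Polynomial

theorem coeff_prod_sum_of_natDegree_le {R ι : Type*} [CommSemiring R] (s : Finset ι)
    (f : ι → R[X]) (d : ι → ℕ) (h : ∀ i ∈ s, (f i).natDegree ≤ d i) :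
    (∏ i ∈ s, f i).coeff (∑ i ∈ s, d i) = ∏ i ∈ s, (f i).coeff (d i) := by
  classical
  induction s using Finset.induction_on with
  | empty => simp
  | insert a s ha ih =>
    have hs : ∀ i ∈ s, (f i).natDegree ≤ d i := fun i hi => h i (Finset.mem_insert_of_mem hi)
    rw [Finset.prod_insert ha, Finset.sum_insert ha, Finset.prod_insert ha,
      coeff_mul_add_eq_of_natDegree_le (h a (Finset.mem_insert_self a s))
        ((natDegree_prod_le _ _).trans (Finset.sum_le_sum hs)), ih hs]

end Polynomial

namespace Matrix

open Equiv.Perm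

variable {n R : Type*} [Fintype n] [DecidableEq n] [CommRing R]

theorem natDegree_det_le_of_le_add (M : Matrix n n (Polynomial R)) (r c : n → ℕ)
    (h : ∀ i j, (M i j).natDegree ≤ r i + c j) :
    M.det.natDegree ≤ ∑ i, r i + ∑ j, c j := by
  rw [det_apply]
  refine Polynomial.natDegree_sum_le_of_forall_le _ _ fun σ _ => ?_
  calc (sign σ • ∏ i, M (σ i) i).natDegree ≤ (∏ i, M (σ i) i).natDegree := by
        rcases Int.units_eq_one_or (sign σ) with hσ | hσ <;> simp [hσ]
    _ ≤ ∑ i, (r (σ i) + c i) :=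
        (Polynomial.natDegree_prod_le _ _).trans (Finset.sum_le_sum fun i _ => h _ _)
    _ = ∑ i, r i + ∑ j, c j := by rw [Finset.sum_add_distrib, Equiv.sum_comp σ r]

theorem coeff_det_of_le_add (M : Matrix n n (Polynomial R)) (r c : n → ℕ)
    (h : ∀ i j, (M i j).natDegree ≤ r i + c j) :
    M.det.coeff (∑ i, r i + ∑ j, c j) = (of fun i j => (M i j).coeff (r i + c j)).det := by
  rw [det_apply, det_apply, Polynomial.finsetSum_coeff]
  refine Finset.sum_congr rfl fun σ _ => ?_
  have hsum : ∑ i, r i + ∑ j, c j = ∑ i, (r (σ i) + c i) := by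
    rw [Finset.sum_add_distrib, Equiv.sum_comp σ r]
  rw [Polynomial.coeff_smul, hsum, Polynomial.coeff_prod_sum_of_natDegree_le _ _ _ fun i _ => h _ _]
  rfl

end Matrix

namespace MvPolynomial

theorem coeff_coeff_C_X_mul_X_add_map_C_pow_mul {σ A : Type*} [CommSemiring A] (i : σ)
    (w g : MvPolynomial σ A) (n : ℕ) (e : σ →₀ ℕ) (t : ℕ) :
    (coeff e ((C Polynomial.X * X i + map Polynomial.C w) ^ n * map Polynomial.C g)).coeff t =
      if t ≤ n then (n.choose t : A) * coeff e (X i ^ t * w ^ (n - t) * g) else 0 := by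
  have hexp : (C Polynomial.X * X i + map Polynomial.C w) ^ n * map Polynomial.C g =
      ∑ j ∈ Finset.range (n + 1), C (Polynomial.X ^ j) *
        map Polynomial.C (C (n.choose j : A) * (X i ^ j * w ^ (n - j) * g)) := by
    rw [add_pow, Finset.sum_mul]
    refine Finset.sum_congr rfl fun j _ => ?_
    rw [← C_eq_coe_nat]
    simp only [map_mul, map_pow, map_X, mul_pow, map_natCast]
    ring
  simp only [hexp, coeff_sum, coeff_C_mul, coeff_map, Polynomial.finsetSum_coeff,
    mul_comm (Polynomial.X ^ _), Polynomial.coeff_C_mul_X_pow, Finset.sum_ite_eq,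
    Finset.mem_range, Nat.lt_succ_iff]

theorem monomial_add_monomial_pow {σ R : Type*} [CommSemiring R] (u v : σ →₀ ℕ)
    (α β : R) (n : ℕ) :
    (monomial u α + monomial v β) ^ n = ∑ s ∈ Finset.range (n + 1),
      monomial (s • u + (n - s) • v) (α ^ s * β ^ (n - s) * n.choose s) := by
  rw [add_pow]
  refine Finset.sum_congr rfl fun s _ => ?_
  rw [monomial_pow, monomial_pow, monomial_mul, ← C_eq_coe_nat, mul_comm _ (C _), C_mul_monomial]
  ring_nf

section PolynomialIn

variable {σ : Type*} [DecidableEq σ]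

section CommSemiring

variable {R : Type*} [CommSemiring R]

def polynomialIn (a : σ) : MvPolynomial σ R →ₐ[R] Polynomial (MvPolynomial {b // b ≠ a} R) :=
  (optionEquivLeft R {b // b ≠ a}).toAlgHom.comp (rename (Equiv.optionSubtypeNe a).symm)

theorem natDegree_polynomialIn (a : σ) (f : MvPolynomial σ R) :
    (polynomialIn a f).natDegree = degreeOf a f :=
  (degreeOf_eq_natDegree a f).symm

@[simp]
theorem polynomialIn_X_self (a : σ) : polynomialIn a (X a : MvPolynomial σ R) = Polynomial.X := by
  simp [polynomialIn, optionEquivLeft_X_none]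

@[simp]
theorem polynomialIn_X_of_ne {a b : σ} (h : b ≠ a) :
    polynomialIn a (X b : MvPolynomial σ R) = Polynomial.C (X ⟨b, h⟩) := by
  simp [polynomialIn, Equiv.optionSubtypeNe_symm_apply, h, optionEquivLeft_X_some]

end CommSemiring

section CommRing

variable {R : Type*} [CommRing R]

theorem constantCoeff_coeff_polynomialIn_sub_X_pow_mul {a j : σ} (hj : j ≠ a) {n : ℕ}
    (hn : n ≠ 0) (f g : MvPolynomial σ R) (t : ℕ) :
    constantCoeff ((polynomialIn a (f - X j ^ n * g)).coeff t) =
      constantCoeff ((polynomialIn a f).coeff t) := by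
  rw [map_sub, map_mul, map_pow, polynomialIn_X_of_ne hj, ← Polynomial.C_pow, Polynomial.coeff_sub,
    Polynomial.coeff_C_mul, map_sub, map_mul, map_pow, constantCoeff_X, zero_pow hn, zero_mul,
    sub_zero]

theorem coeff_polynomialIn_sub_X_self_pow_mul (a : σ) (n : ℕ) (f g : MvPolynomial σ R) (t : ℕ) :
    (polynomialIn a (f - X a ^ n * g)).coeff (t + n) =
      (polynomialIn a f).coeff (t + n) - (polynomialIn a g).coeff t := by
  simp [Polynomial.coeff_X_pow_mul]

end CommRing

end PolynomialIn

end MvPolynomial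

section Expv

variable {a b c d a' b' c' d' : ℕ}

@[simp]
theorem expv_apply_zero : expv a b c d 0 = a := rfl

@[simp]
theorem expv_apply_one : expv a b c d 1 = b := rfl

@[simp]
theorem expv_apply_two : expv a b c d 2 = c := rfl

@[simp]
theorem expv_apply_three : expv a b c d 3 = d := rfl

theorem expv_ext_iff {e : Fin 4 →₀ ℕ} :
    e = expv a b c d ↔ e 0 = a ∧ e 1 = b ∧ e 2 = c ∧ e 3 = d := by
  refine ⟨fun h => by simp [h], fun ⟨h0, h1, h2, h3⟩ => ?_⟩
  ext i
  fin_cases i <;> simp [h0, h1, h2, h3]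

theorem expv_add : expv a b c d + expv a' b' c' d' = expv (a + a') (b + b') (c + c') (d + d') := by
  simp [expv_ext_iff]

theorem expv_sub : expv a b c d - expv a' b' c' d' = expv (a - a') (b - b') (c - c') (d - d') := by
  simp [expv_ext_iff]

theorem nsmul_expv (n : ℕ) : n • expv a b c d = expv (n * a) (n * b) (n * c) (n * d) := by
  simp [expv_ext_iff]

theorem expv_le_expv_iff :
    expv a b c d ≤ expv a' b' c' d' ↔ a ≤ a' ∧ b ≤ b' ∧ c ≤ c' ∧ d ≤ d' := by
  refine ⟨fun h => ⟨h 0, h 1, h 2, h 3⟩, fun ⟨h0, h1, h2, h3⟩ i => ?_⟩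
  fin_cases i <;> simpa

theorem expv_inj :
    expv a b c d = expv a' b' c' d' ↔ a = a' ∧ b = b' ∧ c = c' ∧ d = d' := by
  simp [expv_ext_iff]

theorem monomial_expv {R : Type*} [CommSemiring R] (r : R) :
    monomial (expv a b c d) r = C r * X 0 ^ a * X 1 ^ b * X 2 ^ c * X 3 ^ d := by
  simp only [X_pow_eq_monomial, C_mul_monomial, monomial_mul, mul_one]
  congr 2
  rw [eq_comm, expv_ext_iff]
  simp

end Expv

def kummer (R : Type*) [CommRing R] : MvPolynomial (Fin 4) R :=
  X 1 ^ 2 * X 3 ^ 2 - 4 * X 0 * X 2 * X 3 ^ 2 + 4 * X 0 ^ 3 * X 3 - 4 * X 2 ^ 3 * X 3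
    + 4 * X 0 ^ 2 * X 2 ^ 2 - 8 * X 0 * X 1 ^ 2 * X 2 + 4 * X 1 ^ 4

theorem kappa2_eq_kummer : kappa2 k = kummer _ := rfl

theorem map_kummer {R S : Type*} [CommRing R] [CommRing S] (f : R →+* S) :
    map f (kummer R) = kummer S := by
  simp [kummer]

def kummerSlice (R : Type*) [CommRing R] : MvPolynomial (Fin 4) R :=
  (X 0 ^ 2 - X 2 * X 3) * (X 0 * X 3 + X 2 ^ 2)

section Kummer

variable {R : Type*} [CommRing R]

theorem kummer_eq : kummer R = 4 * kummerSlice R +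
    X 1 ^ 2 * (X 3 ^ 2 - 8 * X 0 * X 2 + 4 * X 1 ^ 2) := by
  rw [kummer, kummerSlice]
  ring

theorem coeff_kummer_pow_of_apply_one_eq_zero (n : ℕ) {e : Fin 4 →₀ ℕ} (he : e 1 = 0) :
    coeff e (kummer R ^ n) = 4 ^ n * coeff e (kummerSlice R ^ n) := by
  obtain ⟨q, hq⟩ := sub_dvd_pow_sub_pow (kummer R) (4 * kummerSlice R) n
  have hsplit : kummer R ^ n = C (4 ^ n) * kummerSlice R ^ n +
      X 1 ^ 2 * ((X 3 ^ 2 - 8 * X 0 * X 2 + 4 * X 1 ^ 2) * q) := by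
    rw [← sub_eq_iff_eq_add', map_pow, map_ofNat, ← mul_pow, hq, kummer_eq]
    ring
  rw [hsplit, coeff_add, coeff_C_mul, X_pow_eq_monomial, coeff_monomial_mul', if_neg, add_zero]
  simp [Finsupp.single_le_iff, he]

theorem coeff_expv_kummerSlice_pow (n m1 m3 m4 : ℕ) :
    coeff (expv m1 0 m3 m4) (kummerSlice R ^ n) =
      ∑ s ∈ Finset.range (n + 1), ∑ t ∈ Finset.range (n + 1),
        if 2 * s + t = m1 ∧ (n - s) + 2 * (n - t) = m3 ∧ (n - s) + t = m4 then
          (-1 : R) ^ (n - s) * n.choose s * n.choose t else 0 := by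
  have h₁ : (X 0 ^ 2 - X 2 * X 3 : MvPolynomial (Fin 4) R) =
      monomial (expv 2 0 0 0) 1 + monomial (expv 0 0 1 1) (-1) := by
    simp only [monomial_expv, map_one, map_neg]
    ring
  have h₂ : (X 0 * X 3 + X 2 ^ 2 : MvPolynomial (Fin 4) R) =
      monomial (expv 1 0 0 1) 1 + monomial (expv 0 0 2 0) 1 := by
    simp only [monomial_expv, map_one]
    ring
  rw [kummerSlice, mul_pow, h₁, h₂, monomial_add_monomial_pow, monomial_add_monomial_pow,
    Finset.sum_mul_sum, coeff_sum]
  refine Finset.sum_congr rfl fun s _ => ?_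
  rw [coeff_sum]
  refine Finset.sum_congr rfl fun t _ => ?_
  simp only [monomial_mul, nsmul_expv, expv_add, coeff_monomial, expv_inj]
  exact if_congr (by constructor <;> intro h <;> omega) (by ring) rfl

theorem coeff_kummer_pow_expv_eq_zero {n m1 m3 m4 : ℕ}
    (h : ∀ s t, s ≤ n → t ≤ n → 2 * s + t = m1 → (n - s) + t = m4 → False) :
    coeff (expv m1 0 m3 m4) (kummer R ^ n) = 0 := by
  rw [coeff_kummer_pow_of_apply_one_eq_zero n rfl, coeff_expv_kummerSlice_pow]
  refine mul_eq_zero_of_right _ (Finset.sum_eq_zero fun s hs => Finset.sum_eq_zero fun t ht => ?_)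
  rw [Finset.mem_range] at hs ht
  exact if_neg fun h' => h s t (by omega) (by omega) h'.1 h'.2.2

theorem coeff_kummer_pow_expv {n m1 m3 m4 s t : ℕ} (hs : s ≤ n) (ht : t ≤ n)
    (h1 : 2 * s + t = m1) (h3 : (n - s) + 2 * (n - t) = m3) (h4 : (n - s) + t = m4) :
    coeff (expv m1 0 m3 m4) (kummer R ^ n) =
      4 ^ n * ((-1) ^ (n - s) * n.choose s * n.choose t) := by
  rw [coeff_kummer_pow_of_apply_one_eq_zero n rfl, coeff_expv_kummerSlice_pow,
    Finset.sum_eq_single_of_mem s (by simpa [Nat.lt_succ_iff] using hs),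
    Finset.sum_eq_single_of_mem t (by simpa [Nat.lt_succ_iff] using ht), if_pos ⟨h1, h3, h4⟩]
  · exact fun t' _ ht' => if_neg fun h => ht' (by omega)
  · intro s' hs' hs's
    rw [Finset.mem_range] at hs'
    exact Finset.sum_eq_zero fun t' _ => if_neg fun h => hs's (by omega)

end Kummer

section CharP

variable {R : Type*} [CommRing R] {p : ℕ}

theorem cast_choose_pred_eq_neg_one_pow (hp : p.Prime) [CharP R p] {i : ℕ} (hi : i < p) :
    ((p - 1).choose i : R) = (-1) ^ i := by
  induction i with
  | zero => simp
  | succ i ih =>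
    have hpascal : p.choose (i + 1) = (p - 1).choose i + (p - 1).choose (i + 1) := by
      conv_lhs => rw [← Nat.sub_add_cancel hp.one_le]
      exact Nat.choose_succ_succ _ _
    have hzero : (p.choose (i + 1) : R) = 0 :=
      (CharP.cast_eq_zero_iff R p _).2 (hp.dvd_choose_self i.succ_ne_zero hi)
    rw [hpascal, Nat.cast_add, ih (by omega)] at hzero
    rw [pow_succ]
    linear_combination hzero

theorem natCast_pow_pred_eq_one (hp : p.Prime) [CharP R p] {m : ℕ} (hm : ¬ p ∣ m) :
    (m : R) ^ (p - 1) = 1 := by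
  have := Fact.mk hp
  have h := ZMod.pow_card_sub_one_eq_one ((ZMod.natCast_eq_zero_iff m p).not.2 hm)
  simpa using congrArg (ZMod.castHom dvd_rfl R) h

theorem coeff_kummer_pow_pred_expv (hp : p.Prime) (hp2 : p ≠ 2) [CharP R p]
    {m1 m3 m4 s t : ℕ} (hs : s ≤ p - 1) (ht : t ≤ p - 1) (h1 : 2 * s + t = m1)
    (h3 : (p - 1 - s) + 2 * (p - 1 - t) = m3) (h4 : (p - 1 - s) + t = m4) :
    coeff (expv m1 0 m3 m4) (kummer R ^ (p - 1)) = (-1) ^ t := by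
  have := hp.two_le
  have hfour : (4 : R) ^ (p - 1) = 1 := by
    have hdvd : ¬ p ∣ 4 := fun h => hp2 ((Nat.prime_dvd_prime_iff_eq hp Nat.prime_two).1
      (hp.dvd_of_dvd_pow (n := 2) h))
    exact_mod_cast natCast_pow_pred_eq_one hp hdvd
  rw [coeff_kummer_pow_expv hs ht h1 h3 h4, cast_choose_pred_eq_neg_one_pow hp (by omega),
    cast_choose_pred_eq_neg_one_pow hp (by omega), hfour, one_mul, ← pow_add,
    Nat.sub_add_cancel hs, (hp.even_sub_one hp2).neg_one_pow, one_mul]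

end CharP

def vplRest : MvPolynomial (Fin 4) (MvPolynomial {b : Fin 3 // b ≠ 1} k) :=
  C (X ⟨0, by decide⟩) * X 0 + C (X ⟨2, by decide⟩) * X 2 + X 3

theorem map_polynomialIn_vpl2 :
    map (polynomialIn (R := k) (1 : Fin 3) : MvPolynomial (Fin 3) k →+* _) (vpl2 k) =
      C Polynomial.X * X 1 + map Polynomial.C (vplRest k) := by
  simp only [vpl2, vplRest, map_add, map_mul, map_C, map_X, RingHom.coe_coe, polynomialIn_X_self,
    polynomialIn_X_of_ne, ne_eq, Fin.reduceEq, not_false_eq_true]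
  ring

theorem coeff_polynomialIn_cc2 (p i1 i2 i3 i4 t : ℕ) :
    (polynomialIn 1 (cc2 k p i1 i2 i3 i4)).coeff t =
      if t ≤ p - 1 then ((p - 1).choose t : MvPolynomial {b : Fin 3 // b ≠ 1} k) *
        coeff (expv i1 i2 i3 i4) (X 1 ^ t * vplRest k ^ (p - 1 - t) * kummer _ ^ (p - 1))
      else 0 := by
  have hmap : (polynomialIn 1 (cc2 k p i1 i2 i3 i4)) = coeff (expv i1 i2 i3 i4)
      ((C Polynomial.X * X 1 + map Polynomial.C (vplRest k)) ^ (p - 1) *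
        map Polynomial.C (kummer _ ^ (p - 1))) := by
    rw [cc2, ← AlgHom.coe_toRingHom, ← coeff_map, map_pow, map_mul, map_polynomialIn_vpl2,
      kappa2_eq_kummer, map_kummer, map_pow, map_kummer, mul_pow]
  rw [hmap, coeff_coeff_C_X_mul_X_add_map_C_pow_mul]

theorem degreeOf_cc2_le (p i1 i2 i3 i4 : ℕ) :
    degreeOf 1 (cc2 k p i1 i2 i3 i4) ≤ min (p - 1) i2 := by
  rw [← natDegree_polynomialIn, Polynomial.natDegree_le_iff_coeff_eq_zero]
  intro t ht
  rw [coeff_polynomialIn_cc2]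
  split_ifs with htp
  · rw [X_pow_eq_monomial, mul_assoc, coeff_monomial_mul', if_neg, mul_zero]
    simp only [Finsupp.single_le_iff, expv_apply_one, not_le]
    omega
  · rfl

theorem constantCoeff_coeff_polynomialIn_cc2 {p i1 i2 i3 i4 : ℕ} (h2 : i2 ≤ p - 1)
    (h4 : p - 1 - i2 ≤ i4) :
    constantCoeff ((polynomialIn 1 (cc2 k p i1 i2 i3 i4)).coeff i2) =
      (p - 1).choose i2 * coeff (expv i1 0 i3 (i4 - (p - 1 - i2))) (kummer k ^ (p - 1)) := by
  have hmap : map constantCoeff (X 1 ^ i2 * vplRest k ^ (p - 1 - i2) * kummer _ ^ (p - 1)) =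
      monomial (expv 0 i2 0 (p - 1 - i2)) 1 * kummer k ^ (p - 1) := by
    simp [vplRest, map_kummer, monomial_expv]
  rw [coeff_polynomialIn_cc2, if_pos h2, map_mul, map_natCast, ← coeff_map, hmap,
    coeff_monomial_mul', if_pos (expv_le_expv_iff.2 ⟨zero_le, le_rfl, zero_le, h4⟩), expv_sub,
    one_mul]
  simp

theorem constantCoeff_coeff_polynomialIn_cc2_sub_X_pow_mul {p i1 i2 i3 i4 : ℕ} {j : Fin 3}
    (hj : j ≠ 1) (hp : p ≠ 0) (h2 : i2 ≤ p - 1) (h4 : p - 1 - i2 ≤ i4)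
    (g : MvPolynomial (Fin 3) k) :
    constantCoeff ((polynomialIn 1 (cc2 k p i1 i2 i3 i4 - X j ^ p * g)).coeff i2) =
      (p - 1).choose i2 * coeff (expv i1 0 i3 (i4 - (p - 1 - i2))) (kummer k ^ (p - 1)) := by
  rw [constantCoeff_coeff_polynomialIn_sub_X_pow_mul hj hp,
    constantCoeff_coeff_polynomialIn_cc2 k h2 h4]

theorem constantCoeff_coeff_polynomialIn_cc2_sub_X_one_pow_mul {p α1 α2 α3 α4 i1 i2 i3 i4 : ℕ}
    (hp : p ≠ 0) (h2 : i2 ≤ p - 1) (h4 : p - 1 - i2 ≤ i4) :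
    constantCoeff ((polynomialIn 1
        (cc2 k p α1 α2 α3 α4 - X 1 ^ p * cc2 k p i1 i2 i3 i4)).coeff (i2 + p)) =
      -((p - 1).choose i2 * coeff (expv i1 0 i3 (i4 - (p - 1 - i2))) (kummer k ^ (p - 1))) := by
  have hzero : (polynomialIn 1 (cc2 k p α1 α2 α3 α4)).coeff (i2 + p) = 0 := by
    refine Polynomial.coeff_eq_zero_of_natDegree_lt ?_
    rw [natDegree_polynomialIn]
    exact (degreeOf_cc2_le k p _ _ _ _).trans_lt (by omega)
  rw [coeff_polynomialIn_sub_X_self_pow_mul, hzero, zero_sub, map_neg,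
    constantCoeff_coeff_polynomialIn_cc2 k h2 h4]

def rowWeight (p : ℕ) : Fin 3 → ℕ := ![p - 1, p - 2, p - 1]

def colWeight (p : ℕ) : Fin 3 → ℕ := ![0, p, 0]

theorem degreeOf_HX2_le (p : ℕ) (i j : Fin 3) :
    degreeOf 1 (HX2 k p i j) ≤ rowWeight p i + colWeight p j := by
  fin_cases i <;> fin_cases j <;>
  · simp only [HX2, rowWeight, colWeight, Fin.zero_eta, Fin.mk_one, Fin.reduceFinMk,
      Matrix.of_apply, Matrix.cons_val, Matrix.cons_val_zero, Matrix.cons_val_one]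
    refine (degreeOf_sub_le _ _ _).trans (max_le ((degreeOf_cc2_le ..).trans (by omega)) ?_)
    refine (degreeOf_mul_le _ _ _).trans
      ((add_le_add (degreeOf_pow_le _ _ _) (degreeOf_cc2_le ..)).trans ?_)
    rw [degreeOf_X]
    split_ifs <;> omega

theorem constantCoeff_coeff_polynomialIn_HX2 {p : ℕ} (hp : p.Prime) (hp5 : p % 6 = 5)
    [CharP k p] :
    (Matrix.of fun i j => constantCoeff ((polynomialIn 1 (HX2 k p i j)).coeff
      (rowWeight p i + colWeight p j))) = !![0, 0, -1; 0, 1, 0; -1, 0, 0] := by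
  obtain ⟨r, hr⟩ : ∃ r, p = 6 * r + 5 := ⟨p / 6, by omega⟩
  have hp2 : p ≠ 2 := by omega
  ext i j
  fin_cases i <;> fin_cases j <;>
    simp (disch := first | decide | omega) only [HX2, rowWeight, colWeight, Fin.zero_eta,
      Fin.mk_one, Fin.reduceFinMk, Matrix.of_apply, Matrix.cons_val, Matrix.cons_val_zero,
      Matrix.cons_val_one, add_zero, constantCoeff_coeff_polynomialIn_cc2_sub_X_pow_mul,
      constantCoeff_coeff_polynomialIn_cc2_sub_X_one_pow_mul]
  -- Six entries vanish: since `p ≡ 5 (mod 6)`, their exponent equations have no solution.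
  all_goals try (rw [coeff_kummer_pow_expv_eq_zero fun s t _ _ _ _ => by omega]; simp)
  · rw [cast_choose_pred_eq_neg_one_pow hp (by omega), (hp.even_sub_one hp2).neg_one_pow,
      coeff_kummer_pow_pred_expv hp hp2 (s := 2 * r + 1) (t := 2 * r + 1) (by omega) (by omega)
        (by omega) (by omega) (by omega), Odd.neg_one_pow ⟨r, by ring⟩, one_mul]
  · rw [cast_choose_pred_eq_neg_one_pow hp (by omega), Odd.neg_one_pow ⟨3 * r + 1, by omega⟩,
      coeff_kummer_pow_pred_expv hp hp2 (s := 0) (t := p - 1) (by omega) (by omega)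
        (by omega) (by omega) (by omega), (hp.even_sub_one hp2).neg_one_pow, mul_one, neg_neg]
  · rw [cast_choose_pred_eq_neg_one_pow hp (by omega), (hp.even_sub_one hp2).neg_one_pow,
      coeff_kummer_pow_pred_expv hp hp2 (s := 4 * r + 3) (t := 4 * r + 3) (by omega) (by omega)
        (by omega) (by omega) (by omega), Odd.neg_one_pow ⟨2 * r + 1, by ring⟩, one_mul]

/-- For `p ≡ 5 (mod 6)` prime and `k` of characteristic `p`, the
determinant of `H_X`, viewed as a polynomial in the variable `b = X 1`, has degree
exactly `4(p−1)`. -/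
theorem stmt2 (p : ℕ) (hp : p.Prime) (hp5 : p % 6 = 5) [CharP k p] :
    MvPolynomial.degreeOf (1 : Fin 3) (HX2 k p).det = 4 * (p - 1) := by
  rw [← natDegree_polynomialIn, AlgHom.map_det]
  set M := (polynomialIn (R := k) (1 : Fin 3)).mapMatrix (HX2 k p)
  have hM : ∀ i j, (M i j).natDegree ≤ rowWeight p i + colWeight p j := fun i j =>
    (natDegree_polynomialIn _ _).trans_le (degreeOf_HX2_le k p i j)
  have hsum : ∑ i, rowWeight p i + ∑ j, colWeight p j = 4 * (p - 1) := by
    simp only [rowWeight, colWeight, Fin.sum_univ_three, Matrix.cons_val_zero,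
      Matrix.cons_val_one, Matrix.cons_val, zero_add, add_zero]
    omega
  have htop : constantCoeff (M.det.coeff (4 * (p - 1))) = -1 := by
    rw [← hsum, Matrix.coeff_det_of_le_add M _ _ hM, RingHom.map_det]
    change (Matrix.of fun i j => constantCoeff ((polynomialIn 1 (HX2 k p i j)).coeff
      (rowWeight p i + colWeight p j))).det = -1
    rw [constantCoeff_coeff_polynomialIn_HX2 k hp hp5]
    simp [Matrix.det_fin_three]
  refine le_antisymm (hsum ▸ Matrix.natDegree_det_le_of_le_add M _ _ hM)
    (Polynomial.le_natDegree_of_ne_zero fun h => ?_)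
  simp [h] at htop

end Stmt2
end

section
/- Let k be a field of characteristic 3 and let A₀, A, B, C ∈ k. Let D(x) = (x³−x)(A₀x³+Ax²+Bx+C) ∈ k[x] and for each i let b_i be the coefficient of x^i in D(x). Then the Hasse–Witt matrix H_Z = [[b₂, b₅],[b₁, b₄]] equals [[−B, A],[−C, B−A₀]]. Moreover, if C ≠ 0 and H_Z^{(3)} denotes the matrix obtained from H_Z by cubing each entry, then H_Z · H_Z^{(3)} is the zero matrix if and only if B⁴ = AC³ and B³ = C²(B−A₀). -/
/-- Let `k` have characteristic 3 and let
`D(x) = (x³−x)(A₀x³+Ax²+Bx+C)`.  Then the Hasse–Witt matrix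
`H_Z = [[b₂,b₅],[b₁,b₄]]` (with `bᵢ` the coefficient of `xⁱ` in `D`) equals
`[[−B, A],[−C, B−A₀]]`, and if `C ≠ 0` then `H_Z ⬝ H_Z^{(3)} = 0` iff
`B⁴ = AC³ ∧ B³ = C²(B−A₀)`. -/
theorem stmt9 (k : Type*) [Field k] [CharP k 3] (A₀ A B C : k)
    (D : Polynomial k)
    (hD : D = (Polynomial.X ^ 3 - Polynomial.X) *
      (Polynomial.C A₀ * Polynomial.X ^ 3 + Polynomial.C A * Polynomial.X ^ 2 +
        Polynomial.C B * Polynomial.X + Polynomial.C C))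
    (H : Matrix (Fin 2) (Fin 2) k)
    (hH : H = !![D.coeff 2, D.coeff 5; D.coeff 1, D.coeff 4]) :
    H = !![-B, A; -C, B - A₀] ∧
    (C ≠ 0 → (H * H.map (· ^ 3) = 0 ↔ (B ^ 4 = A * C ^ 3 ∧ B ^ 3 = C ^ 2 * (B - A₀)))) := by
  have hHe : H = !![-B, A; -C, B - A₀] := by
    subst hD hH
    norm_num [Polynomial.coeff_mul, Finset.Nat.sum_antidiagonal_eq_sum_range_succ_mk,
      Finset.sum_range_succ, Polynomial.coeff_sub, Polynomial.coeff_add,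
      Polynomial.coeff_X_pow, Polynomial.coeff_C_mul, Polynomial.coeff_C, Polynomial.coeff_X]
    rw [show B - A₀ = -A₀ + B by ring]
  refine ⟨hHe, fun hC => ?_⟩
  subst hHe
  have hmap : (!![-B, A; -C, B - A₀]).map (· ^ 3) =
      !![(-B) ^ 3, A ^ 3; (-C) ^ 3, (B - A₀) ^ 3] := by
    ext i j; fin_cases i <;> fin_cases j <;> simp [Matrix.map_apply]
  rw [hmap, Matrix.mul_fin_two, ← Matrix.ext_iff]
  simp only [Fin.forall_fin_two, Matrix.zero_apply, Matrix.cons_val', Matrix.cons_val_zero,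
    Matrix.cons_val_one, Matrix.head_cons, Matrix.head_fin_const, Matrix.empty_val',
    Matrix.cons_val_fin_one, Matrix.of_apply]
  constructor
  · rintro ⟨⟨h00, h01⟩, h10, h11⟩
    refine ⟨by linear_combination h00, ?_⟩
    have : C * (B ^ 3 - C ^ 2 * (B - A₀)) = 0 := by linear_combination h10
    rcases mul_eq_zero.1 this with h | h
    · exact absurd h hC
    · linear_combination h
  · rintro ⟨h1, h2⟩
    refine ⟨⟨by linear_combination h1, ?_⟩, by linear_combination C * h2, ?_⟩
    · have key : C ^ 9 * (-B * A ^ 3 + A * (B - A₀) ^ 3) = 0 := by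
        linear_combination (B^5*A*C^3 + B*A^2*C^6) * h1 -
          (A*C^3*(C^4*(B-A₀)^2 + C^2*(B-A₀)*B^3 + B^6)) * h2
      rcases mul_eq_zero.1 key with h | h
      · exact absurd (pow_eq_zero_iff (by norm_num) |>.1 h) hC
      · exact h
    · have key : C ^ 8 * (-C * A ^ 3 + (B - A₀) * (B - A₀) ^ 3) = 0 := by
        linear_combination (B^8 + B^4*A*C^3 + A^2*C^6) * h1 -
          (C^6*(B-A₀)^3 + C^4*(B-A₀)^2*B^3 + C^2*(B-A₀)*B^6 + B^9) * h2
      rcases mul_eq_zero.1 key with h | h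
      · exact absurd (pow_eq_zero_iff (by norm_num) |>.1 h) hC
      · exact h
end

section
/- Let k be a field of characteristic 3 and let α ∈ k. Let A(x) = x³ − αx² + αx + (α+1) and B(x) = (x−α)(x−(α+1))(αx+(α+1)), and let D(x) = A(x)B(x) ∈ k[x]; for each s let c_s denote the coefficient of x^s in D(x). Then the matrix M = [[c₂, c₁],[c₅, c₄]] equals [[(α+1)³, −(α+1)⁴],[1, −(α+1)]], and M^{(3)} · M = 0, where M^{(3)} is the matrix obtained from M by cubing each entry. -/
/-- Let `k` have characteristic 3 and `α ∈ k`.  With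
`A(x) = x³ − αx² + αx + (α+1)`, `B(x) = (x−α)(x−(α+1))(αx+(α+1))` and `D = A·B`,
the matrix `M = [[c₂,c₁],[c₅,c₄]]` of coefficients of `D` equals
`[[(α+1)³, −(α+1)⁴],[1, −(α+1)]]`, and `M^{(3)} ⬝ M = 0` (entrywise cubes). -/
theorem stmt10 (k : Type*) [Field k] [CharP k 3] (α : k)
    (D : Polynomial k)
    (hD : D = (Polynomial.X ^ 3 - Polynomial.C α * Polynomial.X ^ 2 +
        Polynomial.C α * Polynomial.X + Polynomial.C (α + 1)) *
      ((Polynomial.X - Polynomial.C α) * (Polynomial.X - Polynomial.C (α + 1)) *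
        (Polynomial.C α * Polynomial.X + Polynomial.C (α + 1))))
    (M : Matrix (Fin 2) (Fin 2) k)
    (hM : M = !![D.coeff 2, D.coeff 1; D.coeff 5, D.coeff 4]) :
    M = !![(α + 1) ^ 3, -(α + 1) ^ 4; 1, -(α + 1)] ∧
    M.map (· ^ 3) * M = 0 := by
  have h3 : (3 : k) = 0 := by exact_mod_cast CharP.cast_eq_zero k 3
  have hc2 : D.coeff 2 = (α + 1) ^ 3 := by
    subst hD
    simp only [Polynomial.coeff_mul, Finset.Nat.sum_antidiagonal_eq_sum_range_succ_mk,
      Finset.sum_range_succ, Finset.sum_range_zero, Polynomial.coeff_add, Polynomial.coeff_sub,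
      Polynomial.coeff_C_mul, Polynomial.coeff_X_pow, Polynomial.coeff_X, Polynomial.coeff_C]
    norm_num
    linear_combination (-α - 3*α^2 - 2*α^3) * h3
  have hc1 : D.coeff 1 = -(α + 1) ^ 4 := by
    subst hD
    simp only [Polynomial.coeff_mul, Finset.Nat.sum_antidiagonal_eq_sum_range_succ_mk,
      Finset.sum_range_succ, Finset.sum_range_zero, Polynomial.coeff_add, Polynomial.coeff_sub,
      Polynomial.coeff_C_mul, Polynomial.coeff_X_pow, Polynomial.coeff_X, Polynomial.coeff_C]
    norm_num
    linear_combination (α^2 + 2*α^3 + α^4) * h3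
  have hc5 : D.coeff 5 = 1 := by
    subst hD
    simp only [Polynomial.coeff_mul, Finset.Nat.sum_antidiagonal_eq_sum_range_succ_mk,
      Finset.sum_range_succ, Finset.sum_range_zero, Polynomial.coeff_add, Polynomial.coeff_sub,
      Polynomial.coeff_C_mul, Polynomial.coeff_X_pow, Polynomial.coeff_X, Polynomial.coeff_C]
    norm_num
    linear_combination (-α^2) * h3
  have hc4 : D.coeff 4 = -(α + 1) := by
    subst hD
    simp only [Polynomial.coeff_mul, Finset.Nat.sum_antidiagonal_eq_sum_range_succ_mk,
      Finset.sum_range_succ, Finset.sum_range_zero, Polynomial.coeff_add, Polynomial.coeff_sub,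
      Polynomial.coeff_C_mul, Polynomial.coeff_X_pow, Polynomial.coeff_X, Polynomial.coeff_C]
    norm_num
    linear_combination (-α + α^3) * h3
  have hM' : M = !![(α + 1) ^ 3, -(α + 1) ^ 4; 1, -(α + 1)] := by
    rw [hM, hc2, hc1, hc5, hc4]
  refine ⟨hM', ?_⟩
  subst hM'
  ext i j
  fin_cases i <;> fin_cases j <;>
    simp [Matrix.mul_apply, Fin.sum_univ_succ] <;> ring
end

section
/- Let k be a field of characteristic 3 and let α ∈ k with α ∉ {0, 1, −1}. Then the polynomial D(x) = (x³ − αx² + αx + (α+1)) · (x−α)(x−(α+1))(αx+(α+1)) ∈ k[x] has degree 6 and is squarefree (it has no repeated roots in an algebraic closure of k). -/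
open Polynomial

private lemma cop_lin {k : Type*} [Field k] (a : k) (p : k[X]) (h : p.eval a ≠ 0) :
    IsCoprime (X - C a) p :=
  ((irreducible_X_sub_C a).coprime_iff_not_dvd).mpr fun hd => h ((dvd_iff_isRoot).mp hd)

/-- Let `k` have characteristic 3 and `α ∈ k` with `α ∉ {0,1,−1}`.
Then `D(x) = (x³ − αx² + αx + (α+1))·(x−α)(x−(α+1))(αx+(α+1))` has degree 6 and is
squarefree, with no repeated roots in an algebraic closure (i.e. `D` is separable). -/
theorem stmt11 (k : Type*) [Field k] [CharP k 3] (α : k)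
    (h0 : α ≠ 0) (h1 : α ≠ 1) (h2 : α ≠ -1)
    (D : Polynomial k)
    (hD : D = (Polynomial.X ^ 3 - Polynomial.C α * Polynomial.X ^ 2 +
        Polynomial.C α * Polynomial.X + Polynomial.C (α + 1)) *
      ((Polynomial.X - Polynomial.C α) * (Polynomial.X - Polynomial.C (α + 1)) *
        (Polynomial.C α * Polynomial.X + Polynomial.C (α + 1)))) :
    D.natDegree = 6 ∧ Squarefree D ∧ D.Separable := by
  have h3 : (3 : k) = 0 := by exact_mod_cast CharP.cast_eq_zero k 3
  have hα1 : α - 1 ≠ 0 := sub_ne_zero.mpr h1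
  have hα1' : α + 1 ≠ 0 := fun h => h2 (eq_neg_of_add_eq_zero_left h)
  set β : k := -(α + 1) / α with hβ
  have hb : α * β = -(α + 1) := by rw [hβ]; field_simp
  set P : k[X] := X ^ 3 - C α * X ^ 2 + C α * X + C (α + 1) with hPdef
  have hl3 : C α * X + C (α + 1) = C α * (X - C β) := by
    rw [mul_sub, ← C_mul, hb, sub_eq_add_neg, ← C_neg, neg_neg]
  -- evaluations of P
  have e1 : P.eval α ≠ 0 := by
    simp only [hPdef, eval_add, eval_sub, eval_mul, eval_pow, eval_X, eval_C]
    intro h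
    have : (α - 1) ^ 2 = 0 := by linear_combination h - α * h3
    exact hα1 (pow_eq_zero_iff (n := 2) (by norm_num) |>.mp this)
  have e2 : P.eval (α + 1) ≠ 0 := by
    simp only [hPdef, eval_add, eval_sub, eval_mul, eval_pow, eval_X, eval_C]
    intro h
    have h2' : (2 : k) * (α + 1) ^ 2 = 0 := by linear_combination h
    have hne : (2 : k) ≠ 0 := by
      intro hh; apply hα1; linear_combination (α - 1) * (h3 - hh)
    exact hα1' (pow_eq_zero_iff (n := 2) (by norm_num) |>.mp
      ((mul_eq_zero.mp h2').resolve_left hne))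
  have e4 : P.eval (-1) ≠ 0 := by
    simp only [hPdef, eval_add, eval_sub, eval_mul, eval_pow, eval_X, eval_C]
    intro h
    exact h0 (by linear_combination -h)
  have e3 : P.eval β ≠ 0 := by
    simp only [hPdef, eval_add, eval_sub, eval_mul, eval_pow, eval_X, eval_C]
    intro h
    have h' : (α * β) ^ 3 - α ^ 2 * (α * β) ^ 2 + α ^ 3 * (α * β) + (α + 1) * α ^ 3 = 0 := by
      linear_combination α ^ 3 * h
    rw [hb] at h'
    have hsq : ((α + 1) * (α - 1)) ^ 2 = 0 := by
      linear_combination -h' - (α ^ 3 + 2 * α ^ 2 + α) * h3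
    rcases mul_eq_zero.mp (pow_eq_zero_iff (n := 2) (by norm_num) |>.mp hsq) with h | h
    · exact hα1' h
    · exact hα1 h
  -- coprimality
  have hCu : IsUnit (C α) := isUnit_C.mpr h0.isUnit
  have copC : ∀ q : k[X], IsCoprime (C α) q := fun q =>
    isCoprime_one_left.of_isCoprime_of_dvd_left hCu.dvd
  have cop12 : IsCoprime (X - C α) (X - C (α + 1)) := by
    apply cop_lin
    simp only [eval_sub, eval_X, eval_C]
    intro h
    exact one_ne_zero (α := k) (by linear_combination -h)
  have copβ1 : IsCoprime (X - C β) (X - C α) := by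
    apply cop_lin
    simp only [eval_sub, eval_X, eval_C]
    intro h
    have h' : α * β - α * α = 0 := by linear_combination α * h
    rw [hb] at h'
    apply hα1
    have : (α - 1) ^ 2 = 0 := by linear_combination -h' - α * h3
    exact pow_eq_zero_iff (n := 2) (by norm_num) |>.mp this
  have copβ2 : IsCoprime (X - C β) (X - C (α + 1)) := by
    apply cop_lin
    simp only [eval_sub, eval_X, eval_C]
    intro h
    have h' : α * β - α * (α + 1) = 0 := by linear_combination α * h
    rw [hb] at h'
    have : (α + 1) ^ 2 = 0 := by linear_combination -h'
    exact hα1' (pow_eq_zero_iff (n := 2) (by norm_num) |>.mp this)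
  have copP1 : IsCoprime P (X - C α) := (cop_lin _ _ e1).symm
  have copP2 : IsCoprime P (X - C (α + 1)) := (cop_lin _ _ e2).symm
  have copPβ : IsCoprime P (X - C β) := (cop_lin _ _ e3).symm
  -- separability of P
  have h3X : (3 : k[X]) = 0 := by
    rw [← map_ofNat (C : k →+* k[X]) 3, h3, map_zero]
  have hPder : derivative P = C α * (X - C (-1)) := by
    rw [hPdef]
    simp only [derivative_add, derivative_sub, derivative_mul, derivative_pow,
      derivative_X, derivative_C, C_neg, map_ofNat, map_one, Nat.cast_ofNat]
    linear_combination (norm := ring_nf) (X ^ 2 - C α * X) * h3X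
  have sepP : P.Separable := by
    rw [Polynomial.Separable, hPder]
    exact (copC _).symm.mul_right (cop_lin (-1) P e4).symm
  have sepLin : ∀ a : k, (X - C a : k[X]).Separable := fun a => separable_X_sub_C
  have sepl3 : (C α * (X - C β)).Separable :=
    ((separable_C α).mpr h0.isUnit).mul (sepLin β) (copC _)
  have sepD : D.Separable := by
    rw [hD, hl3]
    refine sepP.mul ?_ ?_
    · refine ((sepLin α).mul (sepLin (α + 1)) cop12).mul sepl3 ?_
      exact (copC _).symm.mul_right (copβ1.symm.mul_left copβ2.symm)
    · exact (copP1.mul_right copP2).mul_right ((copC P).symm.mul_right copPβ)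
  refine ⟨?_, sepD.squarefree, sepD⟩
  rw [hD, hPdef]
  compute_degree!
end

section
/- Let G be an abelian group and let τ : G → G be a group automorphism. Let F₊ = {x ∈ G : τ(x) = x} and F₋ = {x ∈ G : τ(x) = −x}, and suppose both F₊ and F₋ are finite. Consider the quotient set K = G/∼, where x ∼ y if and only if y = x or y = −x, with the action on K induced by τ. Then the set of elements of K fixed by τ is finite, and 2 · |{P ∈ K : τ(P) = P}| = |F₊| + |F₋|. -/
/-!
The fixed points of the induced map on `K` are the classes `{x, -x}` with `τ x = ±x`, that is
the image of the negation-stable finite set `F₊ ∪ F₋`. Each such class has two elements of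
`F₊ ∪ F₋`, except when `x = -x`, and an element of `F₊ ∪ F₋` with `x = -x` is exactly an
element of `F₊ ∩ F₋`. Counting the fibres of `F₊ ∪ F₋ → K` therefore gives
`2 |Fix| = |F₊ ∪ F₋| + |F₊ ∩ F₋| = |F₊| + |F₋|`.
-/

/-- The equivalence relation on an abelian group identifying `x` with `−x`. -/
def negQuotSetoid (G : Type*) [AddCommGroup G] : Setoid G where
  r x y := y = x ∨ y = -x
  iseqv := by
    constructor
    · intro x; exact Or.inl rfl
    · rintro x y (rfl | rfl)
      · exact Or.inl rfl
      · exact Or.inr (neg_neg x).symm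
    · rintro x y z h1 h2
      rcases h1 with rfl | rfl
      · exact h2
      · rcases h2 with rfl | rfl
        · exact Or.inr rfl
        · exact Or.inl (neg_neg x)

namespace negQuotSetoid

variable {G : Type*} [AddCommGroup G]

theorem mk_eq_mk_iff {x y : G} :
    Quotient.mk (negQuotSetoid G) x = Quotient.mk _ y ↔ y = x ∨ y = -x :=
  Quotient.eq

open Classical in
theorem filter_mk_eq_mk {s : Finset G} (hs : ∀ x ∈ s, -x ∈ s) {x : G} (hx : x ∈ s) :
    {y ∈ s | Quotient.mk (negQuotSetoid G) y = Quotient.mk _ x} = {x, -x} := by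
  ext y
  simp only [Finset.mem_filter, Finset.mem_insert, Finset.mem_singleton, mk_eq_mk_iff,
    eq_comm (a := x), neg_eq_iff_eq_neg]
  constructor
  · exact And.right
  · rintro (rfl | rfl)
    · exact ⟨hx, Or.inl rfl⟩
    · exact ⟨hs x hx, Or.inr rfl⟩

open Classical in
theorem two_mul_card_image_mk {s : Finset G} (hs : ∀ x ∈ s, -x ∈ s) :
    2 * (s.image (Quotient.mk (negQuotSetoid G))).card =
      s.card + {x ∈ s | x = -x}.card := by
  rw [Finset.card_eq_sum_card_image (Quotient.mk (negQuotSetoid G)) s,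
    Finset.card_eq_sum_card_fiberwise (t := s.image (Quotient.mk (negQuotSetoid G)))
      (fun x hx => Finset.mem_image_of_mem _ (Finset.mem_filter.1 hx).1),
    ← Finset.sum_add_distrib, Finset.sum_const_nat (m := 2), mul_comm]
  intro P hP
  obtain ⟨x, hx, rfl⟩ := Finset.mem_image.1 hP
  rw [Finset.filter_comm, filter_mk_eq_mk hs hx]
  by_cases hx2 : x = -x
  · rw [← hx2, Finset.pair_eq_singleton, Finset.filter_singleton, if_pos hx2,
      Finset.card_singleton]
  · rw [Finset.card_pair hx2, Finset.filter_eq_empty_iff.2, Finset.card_empty]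
    simp only [Finset.mem_insert, Finset.mem_singleton]
    rintro y (rfl | rfl)
    · exact hx2
    · rw [neg_neg]; exact Ne.symm hx2

theorem two_mul_ncard_image_mk {S : Set G} (hS : S.Finite) (hneg : ∀ x ∈ S, -x ∈ S) :
    2 * (Quotient.mk (negQuotSetoid G) '' S).ncard = S.ncard + {x ∈ S | x = -x}.ncard := by
  classical
  lift S to Finset G using hS
  have hsep : {x ∈ (S : Set G) | x = -x} = ↑{x ∈ S | x = -x} := (Finset.coe_filter _ _).symm
  rw [← Finset.coe_image, hsep, Set.ncard_coe_finset, Set.ncard_coe_finset, Set.ncard_coe_finset]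
  exact two_mul_card_image_mk hneg

theorem mk_mem_image_iff {S : Set G} (hneg : ∀ x ∈ S, -x ∈ S) {x : G} :
    Quotient.mk (negQuotSetoid G) x ∈ Quotient.mk _ '' S ↔ x ∈ S := by
  refine ⟨?_, Set.mem_image_of_mem _⟩
  rintro ⟨y, hy, hyx⟩
  rcases mk_eq_mk_iff.1 hyx with rfl | rfl
  exacts [hy, hneg y hy]

end negQuotSetoid

section FixedAntifixed

variable {G : Type*} [AddCommGroup G]

theorem neg_mem_fixed_union_antifixed {F : Type*} [FunLike F G G] [AddMonoidHomClass F G G]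
    (τ : F) :
    ∀ x ∈ {x : G | τ x = x} ∪ {x | τ x = -x},
      -x ∈ {x : G | τ x = x} ∪ {x | τ x = -x} := by
  rintro x (hx | hx)
  · exact Or.inl (by rw [Set.mem_ofPred_eq, map_neg, hx])
  · exact Or.inr (by rw [Set.mem_ofPred_eq, map_neg, hx])

theorem sep_eq_neg_fixed_union_antifixed (τ : G → G) :
    {x ∈ {x : G | τ x = x} ∪ {x | τ x = -x} | x = -x} =
      {x | τ x = x} ∩ {x | τ x = -x} := by
  ext x
  simp only [Set.mem_union, Set.mem_inter_iff, Set.mem_ofPred_eq]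
  constructor
  · rintro ⟨hx | hx, hneg⟩
    exacts [⟨hx, hx.trans hneg⟩, ⟨hx.trans hneg.symm, hx⟩]
  · rintro ⟨hfix, hanti⟩
    exact ⟨Or.inl hfix, hfix.symm.trans hanti⟩

theorem setOf_induced_fixed_eq_image {F : Type*} [FunLike F G G] [AddMonoidHomClass F G G]
    {τ : F} {τK : Quotient (negQuotSetoid G) → Quotient (negQuotSetoid G)}
    (hτK : ∀ x : G, τK (Quotient.mk _ x) = Quotient.mk _ (τ x)) :
    {P | τK P = P} = Quotient.mk _ '' ({x : G | τ x = x} ∪ {x | τ x = -x}) := by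
  ext P
  induction P using Quotient.inductionOn with | h x => ?_
  rw [Set.mem_ofPred_eq, hτK, eq_comm, negQuotSetoid.mk_eq_mk_iff,
    negQuotSetoid.mk_mem_image_iff (neg_mem_fixed_union_antifixed τ)]
  rfl

end FixedAntifixed

/-- Let `G` be an abelian group and `τ` an automorphism of `G`. Let
`F₊ = {x : τ x = x}` and `F₋ = {x : τ x = −x}` be finite. Let `K = G/(x ∼ ±x)` and let
`τK` be the map induced by `τ` on `K`.  Then the fixed-point set of `τK` is finite and
`2·|Fix(τK)| = |F₊| + |F₋|`. -/
theorem stmt14 (G : Type*) [AddCommGroup G] (τ : G ≃+ G)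
    (hplus : {x : G | τ x = x}.Finite) (hminus : {x : G | τ x = -x}.Finite)
    (τK : Quotient (negQuotSetoid G) → Quotient (negQuotSetoid G))
    (hτK : ∀ x : G,
      τK (Quotient.mk (negQuotSetoid G) x) = Quotient.mk (negQuotSetoid G) (τ x)) :
    {P : Quotient (negQuotSetoid G) | τK P = P}.Finite ∧
    2 * {P : Quotient (negQuotSetoid G) | τK P = P}.ncard =
      {x : G | τ x = x}.ncard + {x : G | τ x = -x}.ncard := by
  have hfix := setOf_induced_fixed_eq_image hτK
  have hfin := hplus.union hminus
  refine ⟨hfix ▸ hfin.image _, ?_⟩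
  rw [hfix, negQuotSetoid.two_mul_ncard_image_mk hfin (neg_mem_fixed_union_antifixed τ),
    sep_eq_neg_fixed_union_antifixed, Set.ncard_union_add_ncard_inter _ _ hplus hminus]
end
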